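/- Let a : T^d → ℝ be a nonnegative C^1 function on the d-dimensional torus. Then for every ε > 0 there exists a constant C_ε > 0 such that for all x ∈ T^d, |∇a(x)|² ≤ C_ε · a(x) + ε. -/

import Mathlib

/-!
At a zero of `a ≥ 0` the gradient vanishes, so the open sets `{|∇a|² < n a + ε}` increase and
exhaust `ℝ^d`. By periodicity of `a` and `∇a` it suffices to cover the closure of a fundamental
domain of the lattice `2πℤ^d`, which is compact, so a single `n` works.
-/

open Real Function Submodule

theorem Function.Periodic.of_mem_span_int {E β : Type*} [AddCommGroup E] {f : E → β}
    {ι : Type*} {b : ι → E} (hf : ∀ i, Periodic f (b i)) {v : E}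
    (hv : v ∈ span ℤ (Set.range b)) : Periodic f v := by
  induction hv using span_induction with
  | mem _ hx => obtain ⟨i, rfl⟩ := hx; exact hf i
  | zero => exact fun x => by rw [add_zero]
  | add _ _ _ _ hx hy => exact hx.add_period hy
  | smul n _ _ hx => exact hx.zsmul n

theorem Function.Periodic.fderiv {𝕜 E F : Type*} [NontriviallyNormedField 𝕜]
    [NormedAddCommGroup E] [NormedSpace 𝕜 E] [NormedAddCommGroup F] [NormedSpace 𝕜 F]
    {f : E → F} {c : E} (hf : Periodic f c) :
    Periodic (fderiv 𝕜 f) c := fun x => by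
  rw [← fderiv_comp_add_right, funext hf]

theorem ZSpan.apply_fract_of_periodic {E ι β : Type*} [NormedAddCommGroup E] [NormedSpace ℝ E]
    [Fintype ι] (b : Module.Basis ι ℝ E) {f : E → β} (hf : ∀ i, Periodic f (b i))
    (x : E) : f (ZSpan.fract b x) = f x :=
  (Periodic.of_mem_span_int hf (ZSpan.floor b x).2).sub_eq x

theorem IsCompact.exists_le_mul_add {X : Type*} [TopologicalSpace X] {K : Set X}
    (hK : IsCompact K) {f g : X → ℝ} (hf : Continuous f) (hg : Continuous g)
    (hf_nonneg : ∀ x, 0 ≤ f x) (hg_zero : ∀ x ∈ K, f x = 0 → g x ≤ 0)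
    {ε : ℝ} (hε : 0 < ε) : ∃ C > 0, ∀ x ∈ K, g x ≤ C * f x + ε := by
  let U : ℕ → Set X := fun n => {x | g x < (n + 1) * f x + ε}
  have hU_open : ∀ n, IsOpen (U n) := fun n =>
    isOpen_lt hg ((continuous_const.mul hf).add continuous_const)
  have hU_mono : Monotone U := fun m n hmn x (hx : g x < _) => by
    show g x < _
    have : (m + 1 : ℝ) * f x ≤ (n + 1) * f x := by gcongr; exact hf_nonneg x
    linarith
  have hKU : K ⊆ ⋃ n, U n := by
    intro x hx
    rw [Set.mem_iUnion]
    rcases (hf_nonneg x).eq_or_lt with h | h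
    · refine ⟨0, ?_⟩
      show g x < _
      rw [← h]
      linarith [hg_zero x hx h.symm]
    · obtain ⟨n, hn⟩ := exists_nat_gt (g x / f x)
      refine ⟨n, ?_⟩
      show g x < _
      rw [div_lt_iff₀ h] at hn
      linarith
  obtain ⟨n, hn⟩ := hK.elim_directed_cover U hU_open hKU hU_mono.directed_le
  exact ⟨n + 1, by positivity, fun x hx => (hn hx).le⟩

/-- For a nonnegative C¹ periodic function `a` on the torus `(ℝ/2πℤ)^d`
(modeled as a `2π`-periodic function on `ℝ^d`), for every `ε > 0` there is
`C > 0` with `|∇a(x)|² ≤ C a(x) + ε` for all `x`. -/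
theorem stmt0 (d : ℕ) (a : EuclideanSpace ℝ (Fin d) → ℝ)
    (ha : ContDiff ℝ 1 a) (hpos : ∀ x, 0 ≤ a x)
    (hper : ∀ (x : EuclideanSpace ℝ (Fin d)) (i : Fin d),
      a (x + (2 * π) • EuclideanSpace.single i 1) = a x) :
    ∀ ε > 0, ∃ C > 0, ∀ x, ‖fderiv ℝ a x‖ ^ 2 ≤ C * a x + ε := by
  intro ε hε
  let b := (EuclideanSpace.basisFun (Fin d) ℝ).toBasis.isUnitSMul
    (w := fun _ => 2 * π) fun _ => (by positivity : (2 * π) ≠ 0).isUnit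
  have hper_b : ∀ i, Periodic a (b i) := fun i x => by
    simpa [b, Module.Basis.isUnitSMul_apply] using hper x i
  have hK : IsCompact (closure (ZSpan.fundamentalDomain b)) :=
    (ZSpan.fundamentalDomain_isBounded b).isCompact_closure
  have hgrad_zero : ∀ x, a x = 0 → ‖fderiv ℝ a x‖ ^ 2 ≤ 0 := fun x hx => by
    have hmin : IsLocalMin a x := .of_forall fun y => hx ▸ hpos y
    simp [hmin.fderiv_eq_zero]
  obtain ⟨C, hC, hCK⟩ := hK.exists_le_mul_add ha.continuous
    ((ha.continuous_fderiv one_ne_zero).norm.pow 2) hpos (fun x _ => hgrad_zero x) hε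
  refine ⟨C, hC, fun x => ?_⟩
  rw [← ZSpan.apply_fract_of_periodic b hper_b x,
    ← ZSpan.apply_fract_of_periodic b (fun i => (hper_b i).fderiv) x]
  exact hCK _ (subset_closure (ZSpan.fract_mem_fundamentalDomain b x))
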